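/- Let Λ = ℤω₁ + ℤω₂ be a lattice in ℂ with fundamental parallelogram Π = {sω₁ + tω₂ | s, t ∈ [0,1)}, let p be an integer greater than 1, and let e : ℂ → ℤ be a discretely supported Λ-periodic function. Define d(z) = e(pz) − e(z). Then e and d are each nonzero at only finitely many points of Π, and ∑_{z ∈ Π} d(z) = (p² − 1)·∑_{z ∈ Π} e(z). -/

import Mathlib

/-!
Multiplication by `p` maps the half-open cell `Π` bijectively onto `pΠ`, which is the disjoint
union of the `p²` translates `Π + k₁ω₁ + k₂ω₂` with `0 ≤ kᵢ < p`. By periodicity each translate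
contributes `∑_Π e`, so `∑_Π e(pz) = p² ∑_Π e`, and the formula for `d` follows by subtracting
`∑_Π e`. In lattice coordinates the bijection is `t ↦ (⌊pt⌋, fract(pt))` on each coordinate of
`[0,1)²`. Finiteness holds because `Π` has compact closure and the support of `e` is discrete.
-/

open Filter Function

/-- `d` is discretely supported: its support has no accumulation points in `ℂ`. -/
def DiscretelySupported (d : ℂ → ℤ) : Prop :=
  ∀ z : ℂ, ¬ AccPt z (𝓟 (Function.support d))

/-- `d` is `Λ`-periodic. -/
def IsPeriodic (Λ : Set ℂ) (d : ℂ → ℤ) : Prop :=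
  ∀ z : ℂ, ∀ l ∈ Λ, d (z + l) = d z

open Set

lemma finite_inter_of_forall_not_accPt {X : Type*} [TopologicalSpace X] {s K : Set X}
    (hs : ∀ z, ¬AccPt z (𝓟 s)) (hK : IsCompact K) : (K ∩ s).Finite := by
  by_contra h
  obtain ⟨x, -, hx⟩ := Set.Infinite.exists_accPt_of_subset_isCompact h hK inter_subset_left
  exact hs x (hx.mono (principal_mono.2 inter_subset_right))

lemma Function.Injective.finite_image_inter_support_iff {α β M : Type*} [Zero M] {f : α → β}
    (hf : Injective f) {s : Set α} {h : β → M} :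
    (f '' s ∩ support h).Finite ↔ (s ∩ support (h ∘ f)).Finite := by
  rw [support_comp_eq_preimage, ← image_inter_preimage,
    finite_image_iff (hf.injOn.mono inter_subset_left)]

lemma finite_inter_support_sub {α G : Type*} [AddGroup G] {s : Set α} {f g : α → G}
    (hf : (s ∩ support f).Finite) (hg : (s ∩ support g).Finite) :
    (s ∩ support fun i => f i - g i).Finite :=
  (hf.union hg).subset <|
    (inter_subset_inter_right _ (support_sub _ _)).trans (inter_union_distrib_left _ _ _).subset

lemma finsum_mem_sub_distrib' {α G : Type*} [AddCommGroup G] {s : Set α} {f g : α → G}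
    (hf : (s ∩ support f).Finite) (hg : (s ∩ support g).Finite) :
    ∑ᶠ i ∈ s, (f i - g i) = ∑ᶠ i ∈ s, f i - ∑ᶠ i ∈ s, g i := by
  rw [eq_sub_iff_add_eq, ← finsum_mem_add_distrib' (finite_inter_support_sub hf hg) hg]
  simp only [sub_add_cancel]

lemma finsum_mem_finset_prod_snd {α β M : Type*} [AddCommMonoid M] (K : Finset α) {s : Set β}
    {f : β → M} (hf : (s ∩ support f).Finite) :
    ∑ᶠ y ∈ (K : Set α) ×ˢ s, f y.2 = K.card • ∑ᶠ x ∈ s, f x := by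
  classical
  have hsupp : (K : Set α) ×ˢ s ∩ support (fun y : α × β => f y.2) =
      ↑(K ×ˢ hf.toFinset) := by
    ext ⟨a, b⟩; simp [and_assoc]
  rw [← finsum_mem_inter_support, hsupp, finsum_mem_coe_finset, Finset.sum_product,
    ← finsum_mem_inter_support f s, finsum_mem_eq_finite_toFinset_sum f hf]
  exact Finset.sum_const (∑ x ∈ hf.toFinset, f x)

section Coordinate

variable {p : ℕ}

lemma floor_natCast_mul_mem_Ico (hp : 0 < p) {t : ℝ} (ht : t ∈ Ico 0 1) :
    ⌊(p : ℝ) * t⌋ ∈ Ico (0 : ℤ) p :=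
  ⟨Int.floor_nonneg.2 (mul_nonneg p.cast_nonneg ht.1),
    Int.floor_lt.2 (by push_cast; nlinarith [ht.2, (Nat.cast_pos.2 hp : (0 : ℝ) < p)])⟩

lemma add_intCast_div_natCast_mem_Ico (hp : 0 < p) {s : ℝ} {k : ℤ} (hs : s ∈ Ico 0 1)
    (hk : k ∈ Ico (0 : ℤ) p) : (s + k) / p ∈ Ico (0 : ℝ) 1 := by
  have hp' : (0 : ℝ) < p := Nat.cast_pos.2 hp
  have hk0 : (0 : ℝ) ≤ k := by exact_mod_cast hk.1
  have hkp : (k : ℝ) + 1 ≤ p := by exact_mod_cast hk.2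
  constructor
  · exact div_nonneg (by linarith [hs.1]) hp'.le
  · rw [div_lt_one hp']; linarith [hs.2]

lemma natCast_mul_add_intCast_div (hp : 0 < p) (s : ℝ) (k : ℤ) :
    (p : ℝ) * ((s + k) / p) = s + k :=
  mul_div_cancel₀ _ (Nat.cast_ne_zero.2 hp.ne')

lemma fract_add_floor_div_natCast (hp : 0 < p) (t : ℝ) :
    (Int.fract ((p : ℝ) * t) + ⌊(p : ℝ) * t⌋) / p = t := by
  rw [Int.fract_add_floor, mul_div_cancel_left₀ _ (Nat.cast_ne_zero.2 hp.ne')]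

end Coordinate

section UnitCube

variable {ι M : Type*} {p : ℕ}

def unitCube (ι : Type*) : Set (ι → ℝ) := univ.pi fun _ => Ico 0 1

lemma finite_image_unitCube_inter_of_forall_not_accPt {X : Type*} [TopologicalSpace X]
    {L : (ι → ℝ) → X} (hL : Continuous L) {s : Set X} (hs : ∀ z, ¬AccPt z (𝓟 s)) :
    (L '' unitCube ι ∩ s).Finite :=
  (finite_inter_of_forall_not_accPt hs (isCompact_Icc.image hL)).subset <|
    inter_subset_inter_left _ <| image_mono fun _ hx =>
      ⟨fun i => (hx i trivial).1, fun i => (hx i trivial).2.le⟩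

lemma bijOn_floor_fract_unitCube (hp : 0 < p) :
    BijOn (fun x : ι → ℝ => ((fun i => ⌊(p : ℝ) * x i⌋), fun i => Int.fract ((p : ℝ) * x i)))
      (unitCube ι) (univ.pi (fun _ => Ico (0 : ℤ) p) ×ˢ unitCube ι) := by
  refine InvOn.bijOn (f' := fun y i => (y.2 i + y.1 i) / p) ⟨fun x _ => ?_, fun y hy => ?_⟩
    (fun x hx => ⟨fun i _ => floor_natCast_mul_mem_Ico hp (hx i trivial),
      fun i _ => ⟨Int.fract_nonneg _, Int.fract_lt_one _⟩⟩)
    (fun y hy i _ => add_intCast_div_natCast_mem_Ico hp (hy.2 i trivial) (hy.1 i trivial))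
  · funext i
    exact fract_add_floor_div_natCast hp (x i)
  · obtain ⟨k, y⟩ := y
    have hs : ∀ i, y i ∈ Ico 0 1 := fun i => hy.2 i trivial
    simp only [natCast_mul_add_intCast_div hp, Int.floor_add_intCast, Int.fract_add_intCast,
      Int.floor_eq_zero_iff.2 (hs _), Int.fract_eq_self.2 (hs _), zero_add]

lemma apply_natCast_smul_eq_apply_fract {g : (ι → ℝ) → M}
    (hg : ∀ x (k : ι → ℤ), g (x + fun i => (k i : ℝ)) = g x) (x : ι → ℝ) :
    g ((p : ℝ) • x) = g fun i => Int.fract ((p : ℝ) * x i) := by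
  rw [← hg (fun i => Int.fract ((p : ℝ) * x i)) fun i => ⌊(p : ℝ) * x i⌋]
  congr 1
  funext i
  simp [Int.fract_add_floor]

variable [AddCommMonoid M] [Fintype ι]

theorem finsum_mem_unitCube_natCast_smul (hp : 0 < p) {g : (ι → ℝ) → M}
    (hg : ∀ x (k : ι → ℤ), g (x + fun i => (k i : ℝ)) = g x)
    (hfin : (unitCube ι ∩ support g).Finite) :
    (unitCube ι ∩ support fun x => g ((p : ℝ) • x)).Finite ∧
      ∑ᶠ x ∈ unitCube ι, g ((p : ℝ) • x) = p ^ Fintype.card ι • ∑ᶠ x ∈ unitCube ι, g x := by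
  classical
  set K := Fintype.piFinset fun _ : ι => Finset.Ico (0 : ℤ) p
  have hbij := bijOn_floor_fract_unitCube (ι := ι) hp
  rw [← show (K : Set (ι → ℤ)) = univ.pi fun _ => Ico (0 : ℤ) p by simp [K]] at hbij
  constructor
  · refine Finite.of_finite_image ((K.finite_toSet.prod hfin).subset ?_)
      (hbij.injOn.mono inter_subset_left)
    rintro _ ⟨x, hx, rfl⟩
    have hφx := hbij.mapsTo hx.1
    exact ⟨hφx.1, hφx.2, (apply_natCast_smul_eq_apply_fract (p := p) hg x).symm.trans_ne hx.2⟩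
  · rw [finsum_mem_eq_of_bijOn (g := fun y => g y.2) _ hbij
      fun x _ => apply_natCast_smul_eq_apply_fract (p := p) hg x, finsum_mem_finset_prod_snd K hfin]
    simp [K]

variable {E : Type*} [AddCommGroup E] [Module ℝ E]

theorem finsum_mem_image_unitCube_natCast_smul {L : (ι → ℝ) →ₗ[ℝ] E} (hL : Injective L)
    (hp : 0 < p) {f : E → M} (hf : ∀ z (k : ι → ℤ), f (z + L fun i => (k i : ℝ)) = f z)
    (hfin : (L '' unitCube ι ∩ support f).Finite) :
    (L '' unitCube ι ∩ support fun z => f ((p : ℝ) • z)).Finite ∧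
      ∑ᶠ z ∈ L '' unitCube ι, f ((p : ℝ) • z) =
        p ^ Fintype.card ι • ∑ᶠ z ∈ L '' unitCube ι, f z := by
  obtain ⟨hfin', hsum⟩ := finsum_mem_unitCube_natCast_smul hp (g := f ∘ L)
    (fun _ _ => by simp only [comp_apply, map_add, hf]) (hL.finite_image_inter_support_iff.1 hfin)
  refine ⟨hL.finite_image_inter_support_iff.2 ?_, ?_⟩
  · simpa only [comp_def, map_smul] using hfin'
  · rw [finsum_mem_image hL.injOn, finsum_mem_image hL.injOn]
    simpa only [comp_apply, map_smul] using hsum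

end UnitCube

lemma linearCombination_fin_two_apply (ω₁ ω₂ : ℂ) (x : Fin 2 → ℝ) :
    Fintype.linearCombination ℝ ![ω₁, ω₂] x = (x 0 : ℂ) * ω₁ + (x 1 : ℂ) * ω₂ := by
  simp [Fintype.linearCombination_apply, Fin.sum_univ_two, Complex.real_smul]

lemma image_unitCube_linearCombination_fin_two (ω₁ ω₂ : ℂ) :
    Fintype.linearCombination ℝ ![ω₁, ω₂] '' unitCube (Fin 2) =
      {z : ℂ | ∃ s t : ℝ, s ∈ Ico (0 : ℝ) 1 ∧ t ∈ Ico (0 : ℝ) 1 ∧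
        z = (s : ℂ) * ω₁ + (t : ℂ) * ω₂} := by
  ext z
  simp only [mem_image, linearCombination_fin_two_apply]
  constructor
  · rintro ⟨x, hx, rfl⟩
    exact ⟨x 0, x 1, hx 0 trivial, hx 1 trivial, rfl⟩
  · rintro ⟨s, t, hs, ht, rfl⟩
    exact ⟨![s, t], by simpa [unitCube, Fin.forall_fin_two] using ⟨hs, ht⟩, by simp⟩

/-- **Degree computation.** Let `Λ = ℤω₁ + ℤω₂` be a lattice with fundamental
parallelogram `Par = {sω₁ + tω₂ | s, t ∈ [0,1)}`, `p > 1` an integer and `e : ℂ → ℤ`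
discretely supported and `Λ`-periodic.  Set `d(z) = e(pz) - e(z)`.  Then `e` and `d`
are nonzero at only finitely many points of `Par` and
`∑_{z ∈ Par} d(z) = (p² - 1) ∑_{z ∈ Par} e(z)`. -/
theorem degree_of_coboundary
    (ω₁ ω₂ : ℂ) (hω : LinearIndependent ℝ ![ω₁, ω₂])
    (Λ : Set ℂ) (hΛ : Λ = {z : ℂ | ∃ m n : ℤ, z = (m : ℂ) * ω₁ + (n : ℂ) * ω₂})
    (Par : Set ℂ)
    (hPar : Par = {z : ℂ | ∃ s t : ℝ, s ∈ Set.Ico (0 : ℝ) 1 ∧ t ∈ Set.Ico (0 : ℝ) 1 ∧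
      z = (s : ℂ) * ω₁ + (t : ℂ) * ω₂})
    (p : ℤ) (hp : 1 < p)
    (e : ℂ → ℤ) (he : DiscretelySupported e) (hper : IsPeriodic Λ e)
    (d : ℂ → ℤ) (hd : ∀ z : ℂ, d z = e ((p : ℂ) * z) - e z) :
    (Par ∩ Function.support e).Finite ∧ (Par ∩ Function.support d).Finite ∧
    ∑ᶠ z ∈ Par, d z = (p ^ 2 - 1) * ∑ᶠ z ∈ Par, e z := by
  lift p to ℕ using by omega
  set L := Fintype.linearCombination ℝ ![ω₁, ω₂]
  rw [← image_unitCube_linearCombination_fin_two] at hPar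
  subst hPar
  have hEfin :=
    finite_image_unitCube_inter_of_forall_not_accPt L.continuous_of_finiteDimensional he
  have hperL (z : ℂ) (k : Fin 2 → ℤ) : e (z + L fun i => (k i : ℝ)) = e z :=
    hper z _ (hΛ ▸ ⟨k 0, k 1, by simp [L, linearCombination_fin_two_apply]⟩)
  have hsmul (z : ℂ) : (p : ℝ) • z = ((p : ℤ) : ℂ) * z := by simp [Complex.real_smul]
  obtain ⟨hGfin, hGsum⟩ := finsum_mem_image_unitCube_natCast_smul
    hω.fintypeLinearCombination_injective (p := p) (by omega) hperL hEfin
  simp only [hsmul] at hGfin hGsum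
  obtain rfl : d = fun z => e (((p : ℤ) : ℂ) * z) - e z := funext hd
  refine ⟨hEfin, finite_inter_support_sub hGfin hEfin, ?_⟩
  rw [finsum_mem_sub_distrib' hGfin hEfin, hGsum, Fintype.card_fin, nsmul_eq_mul]
  push_cast
  ring
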